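/- Fix N ≥ 1 and ν ∈ ℝ. There exists a constant C > 0 such that for every ε ∈ (0,1) and every twice continuously differentiable function w : ℝ^N → ℝ for which sup_{x} (1+|x|²)^{-ν/2} |w(x)| is finite, one has sup_{x ∈ ℝ^N} (1+|x|²)^{-ν/2} |w(x)| ≤ C · sup_{x ∈ ℝ^N} (1+|x|²)^{-ν/2} |ε² Δw(x) - 2 w(x)|. -/

import Mathlib

/-!
Comparison with barriers. For `b` large in terms of `N` and `p`, the barrier
`φ = (b + ‖x‖²)^p` satisfies `Δφ ≤ φ`, hence `(ε²Δ - 2)φ ≤ -φ` for every `ε ≤ 1`.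
If `w ≤ mφ` and `(ε²Δ - 2)w ≥ -aφ`, then `u = w - aφ - η(b + ‖x‖²)φ` satisfies
`(ε²Δ - 2)u ≥ 0` and is `≤ 0` near infinity, so a positive maximum of `u` would give
`0 < 2u ≤ ε²Δu ≤ 0`. Letting `η → 0` yields `w ≤ aφ`, and the same for `-w`.
Finally `φ` with `p = ν/2` is comparable to the weight `(1 + ‖x‖²)^{ν/2}` up to the
factor `b^{|p|}`, which does not depend on `ε`.
-/

/-- The Euclidean Laplacian of a function on `ℝ^N`, as the sum of second partial
derivatives in the coordinate directions. -/
noncomputable def lap {N : ℕ} (u : EuclideanSpace ℝ (Fin N) → ℝ)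
    (x : EuclideanSpace ℝ (Fin N)) : ℝ :=
  ∑ i, fderiv ℝ (fun y => fderiv ℝ u y (EuclideanSpace.single i 1)) x (EuclideanSpace.single i 1)

open Real Filter Set Topology

theorem ContDiff.differentiable_fderiv_apply {E F : Type*} [NormedAddCommGroup E]
    [NormedSpace ℝ E] [NormedAddCommGroup F] [NormedSpace ℝ F] {f : E → F}
    (hf : ContDiff ℝ 2 f) (v : E) : Differentiable ℝ (fun y => fderiv ℝ f y v) :=
  ((hf.fderiv_right (m := 1) (by norm_num)).clm_apply contDiff_const).differentiable
    (by norm_num)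

theorem hasFDerivAt_comp_norm_sq {E : Type*} [NormedAddCommGroup E] [InnerProductSpace ℝ E]
    {g : ℝ → ℝ} {g₁ : ℝ} {y : E} (hg : HasDerivAt g g₁ (‖y‖ ^ 2)) :
    HasFDerivAt (fun z => g (‖z‖ ^ 2)) ((2 * g₁) • innerSL ℝ y) y := by
  refine (hg.comp_hasFDerivAt y (hasStrictFDerivAt_norm_sq y).hasFDerivAt).congr_fderiv ?_
  ext v
  simp
  ring

theorem IsLocalMax.le_zero_of_hasDerivAt {g g' : ℝ → ℝ} {t₀ c : ℝ}
    (hmax : IsLocalMax g t₀) (hg : ∀ t, HasDerivAt g (g' t) t) (hg' : HasDerivAt g' c t₀) :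
    c ≤ 0 := by
  by_contra! hc
  have hcrit : g' t₀ = 0 := hmax.hasDerivAt_eq_zero (hg t₀)
  have hslope : ∀ᶠ t in 𝓝[>] t₀, 0 < slope g' t₀ t :=
    nhdsGT_le_nhdsNE t₀ ((hasDerivAt_iff_tendsto_slope.mp hg').eventually (lt_mem_nhds hc))
  obtain ⟨t₁, ht₁, hsub⟩ := mem_nhdsGT_iff_exists_Ioo_subset.mp
    (hslope.and (nhdsWithin_le_nhds hmax))
  obtain ⟨t, ht⟩ := nonempty_Ioo.mpr ht₁.out
  obtain ⟨ξ, hξ, hmvt⟩ := exists_hasDerivAt_eq_slope g g' ht.1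
    (fun s _ => (hg s).continuousAt.continuousWithinAt) (fun s _ => hg s)
  have hξpos : 0 < g' ξ :=
    pos_of_slope_pos hξ.1 (hsub ⟨hξ.1, hξ.2.trans ht.2⟩).1 hcrit
  have hdecr : (g t - g t₀) / (t - t₀) ≤ 0 :=
    div_nonpos_of_nonpos_of_nonneg (sub_nonpos.mpr (hsub ht).2) (sub_nonneg.mpr ht.1.le)
  linarith

theorem rpow_le_rpow_abs_mul {x y B : ℝ} (hx : 0 < x) (hy : 0 < y) (hxy : x ≤ B * y)
    (hyx : y ≤ B * x) (p : ℝ) : x ^ p ≤ B ^ |p| * y ^ p := by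
  have hB : 0 < B := pos_of_mul_pos_left (hx.trans_le hxy) hy.le
  have hlog₁ : log x ≤ log B + log y := by
    rw [← log_mul hB.ne' hy.ne']; exact log_le_log hx hxy
  have hlog₂ : log y ≤ log B + log x := by
    rw [← log_mul hB.ne' hx.ne']; exact log_le_log hy hyx
  have : p * (log x - log y) ≤ |p| * log B := by
    refine (le_abs_self _).trans ?_
    rw [abs_mul]
    exact mul_le_mul_of_nonneg_left (abs_sub_le_iff.mpr ⟨by linarith, by linarith⟩)
      (abs_nonneg p)
  rw [rpow_def_of_pos hx, rpow_def_of_pos hB, rpow_def_of_pos hy, ← exp_add, exp_le_exp]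
  linarith

section Laplacian

variable {N : ℕ}

theorem lap_sub {f g : EuclideanSpace ℝ (Fin N) → ℝ} (hf : ContDiff ℝ 2 f)
    (hg : ContDiff ℝ 2 g) (x : EuclideanSpace ℝ (Fin N)) :
    lap (f - g) x = lap f x - lap g x := by
  simp only [lap, ← Finset.sum_sub_distrib]
  refine Finset.sum_congr rfl fun i _ => ?_
  set e : EuclideanSpace ℝ (Fin N) := EuclideanSpace.single i 1
  have hpartial : (fun y => fderiv ℝ (f - g) y e)
      = (fun y => fderiv ℝ f y e) - (fun y => fderiv ℝ g y e) := by
    ext y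
    simp [fderiv_sub (hf.differentiable (by norm_num) y) (hg.differentiable (by norm_num) y)]
  rw [hpartial, fderiv_sub (hf.differentiable_fderiv_apply e x)
    (hg.differentiable_fderiv_apply e x)]
  rfl

theorem lap_smul (c : ℝ) (f : EuclideanSpace ℝ (Fin N) → ℝ) (x : EuclideanSpace ℝ (Fin N)) :
    lap (c • f) x = c * lap f x := by
  simp only [lap, Finset.mul_sum]
  refine Finset.sum_congr rfl fun i _ => ?_
  set e : EuclideanSpace ℝ (Fin N) := EuclideanSpace.single i 1
  rw [fderiv_const_smul_field]
  change fderiv ℝ (c • fun y => fderiv ℝ f y e) x e = _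
  rw [fderiv_const_smul_field]
  rfl

theorem lap_neg (f : EuclideanSpace ℝ (Fin N) → ℝ) (x : EuclideanSpace ℝ (Fin N)) :
    lap (-f) x = -lap f x := by
  simp [lap, fderiv_neg]

theorem lap_comp_norm_sq {g g' g'' : ℝ → ℝ} (hg : ∀ s, 0 ≤ s → HasDerivAt g (g' s) s)
    (hg' : ∀ s, 0 ≤ s → HasDerivAt g' (g'' s) s) (x : EuclideanSpace ℝ (Fin N)) :
    lap (fun y => g (‖y‖ ^ 2)) x
      = 4 * ‖x‖ ^ 2 * g'' (‖x‖ ^ 2) + 2 * N * g' (‖x‖ ^ 2) := by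
  have hpartial : ∀ i, (fun y => fderiv ℝ (fun z => g (‖z‖ ^ 2)) y (EuclideanSpace.single i 1))
      = fun y : EuclideanSpace ℝ (Fin N) => 2 * (g' (‖y‖ ^ 2) * y i) := fun i => by
    funext y
    rw [(hasFDerivAt_comp_norm_sq (hg _ (sq_nonneg _))).fderiv]
    simp [EuclideanSpace.inner_single_right]
    ring
  have hsecond : ∀ i,
      fderiv ℝ (fun y : EuclideanSpace ℝ (Fin N) => 2 * (g' (‖y‖ ^ 2) * y i)) x
        (EuclideanSpace.single i 1)
        = 2 * (2 * g'' (‖x‖ ^ 2) * x i * x i + g' (‖x‖ ^ 2)) := fun i => by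
    have h : HasFDerivAt (fun y : EuclideanSpace ℝ (Fin N) => 2 * (g' (‖y‖ ^ 2) * y i)) _ x :=
      ((hasFDerivAt_comp_norm_sq (hg' _ (sq_nonneg _))).mul
        (EuclideanSpace.proj i : EuclideanSpace ℝ (Fin N) →L[ℝ] ℝ).hasFDerivAt).const_mul 2
    rw [h.fderiv]
    simp [EuclideanSpace.inner_single_right]
    ring
  have hsum : ∑ i, x i * x i = ‖x‖ ^ 2 := by rw [EuclideanSpace.norm_sq_eq]; simp [sq]
  have hsummand : ∀ i, 2 * (2 * g'' (‖x‖ ^ 2) * x i * x i + g' (‖x‖ ^ 2))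
      = 4 * g'' (‖x‖ ^ 2) * (x i * x i) + 2 * g' (‖x‖ ^ 2) := fun i => by ring
  simp only [lap, hpartial, hsecond, hsummand, Finset.sum_add_distrib, ← Finset.mul_sum, hsum,
    Finset.sum_const, Finset.card_univ, Fintype.card_fin, nsmul_eq_mul]
  ring

theorem lap_nonpos_of_isLocalMax {u : EuclideanSpace ℝ (Fin N) → ℝ} (hu : ContDiff ℝ 2 u)
    {x₀ : EuclideanSpace ℝ (Fin N)} (hmax : IsLocalMax u x₀) : lap u x₀ ≤ 0 := by
  refine Finset.sum_nonpos fun i _ => ?_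
  set e : EuclideanSpace ℝ (Fin N) := EuclideanSpace.single i 1
  have hline : ∀ t : ℝ, HasDerivAt (fun s : ℝ => x₀ + s • e) e t := fun t => by
    simpa using ((hasDerivAt_id t).smul_const e).const_add x₀
  have hg : ∀ t : ℝ,
      HasDerivAt (fun s => u (x₀ + s • e)) (fderiv ℝ u (x₀ + t • e) e) t := fun t =>
    (hu.differentiable two_ne_zero (x₀ + t • e)).hasFDerivAt.comp_hasDerivAt t (hline t)
  have hg' : HasDerivAt (fun t => fderiv ℝ u (x₀ + t • e) e)
      (fderiv ℝ (fun y => fderiv ℝ u y e) x₀ e) (0 : ℝ) :=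
    (hu.differentiable_fderiv_apply e x₀).hasFDerivAt.comp_hasDerivAt_of_eq (0 : ℝ) (hline 0)
      (by simp)
  have hmax_line : IsLocalMax (fun s : ℝ => u (x₀ + s • e)) 0 :=
    IsLocalMax.comp_continuous (by simpa using hmax) (hline 0).continuousAt
  exact hmax_line.le_zero_of_hasDerivAt hg hg'

theorem nonpos_of_mul_le_mul_lap {u : EuclideanSpace ℝ (Fin N) → ℝ} {c k : ℝ}
    (hu : ContDiff ℝ 2 u) (hc : 0 ≤ c) (hk : 0 < k) (hL : ∀ x, k * u x ≤ c * lap u x)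
    (hinf : ∀ᶠ x in cocompact _, u x ≤ 0) (x : EuclideanSpace ℝ (Fin N)) : u x ≤ 0 := by
  by_contra! hx
  obtain ⟨x₀, hx₀⟩ :=
    hu.continuous.exists_forall_ge' x (hinf.mono fun y hy => hy.trans hx.le)
  have hlap : lap u x₀ ≤ 0 := lap_nonpos_of_isLocalMax hu (Eventually.of_forall hx₀)
  nlinarith [hL x₀, hx₀ x, mul_nonpos_of_nonneg_of_nonpos hc hlap]

end Laplacian

section Barrier

variable {E : Type*} [NormedAddCommGroup E] {N : ℕ} {b p : ℝ}

noncomputable def barrier (b p : ℝ) (x : E) : ℝ := (b + ‖x‖ ^ 2) ^ p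

def barrierConst (N : ℕ) (p : ℝ) : ℝ := 4 * |p| * |p - 1| + 2 * N * |p|

theorem barrierConst_nonneg (N : ℕ) (p : ℝ) : 0 ≤ barrierConst N p := by
  unfold barrierConst; positivity

theorem barrier_pos (hb : 0 < b) (x : E) : 0 < barrier b p x := by
  unfold barrier; positivity

theorem barrier_add_one (hb : 0 < b) (x : E) :
    barrier b (p + 1) x = (b + ‖x‖ ^ 2) * barrier b p x := by
  rw [barrier, barrier, rpow_add_one (by positivity), mul_comm]

theorem contDiff_barrier [InnerProductSpace ℝ E] (hb : 0 < b) :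
    ContDiff ℝ 2 (barrier (E := E) b p) :=
  (contDiff_const.add (contDiff_norm_sq ℝ)).rpow_const_of_ne fun _ => by positivity

theorem barrier_le_rpow_abs_mul_barrier {b' B : ℝ} (hb : 0 < b) (hb' : 0 < b') (hB : 1 ≤ B)
    (hbb' : b ≤ B * b') (hb'b : b' ≤ B * b) (x : E) :
    barrier b p x ≤ B ^ |p| * barrier b' p x :=
  rpow_le_rpow_abs_mul (by positivity) (by positivity)
    (by nlinarith [sq_nonneg ‖x‖]) (by nlinarith [sq_nonneg ‖x‖]) p

theorem lap_barrier (hb : 0 < b) (x : EuclideanSpace ℝ (Fin N)) :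
    lap (barrier b p) x = 4 * ‖x‖ ^ 2 * (p * (p - 1) * (b + ‖x‖ ^ 2) ^ (p - 2))
      + 2 * N * (p * (b + ‖x‖ ^ 2) ^ (p - 1)) := by
  have hshift : ∀ s : ℝ, 0 ≤ s → HasDerivAt (fun t => b + t) 1 s := fun s _ =>
    (hasDerivAt_id s).const_add b
  refine lap_comp_norm_sq (g := fun s => (b + s) ^ p) (g' := fun s => p * (b + s) ^ (p - 1))
    (g'' := fun s => p * (p - 1) * (b + s) ^ (p - 2)) (fun s hs => ?_) (fun s hs => ?_) x
  · simpa using (hshift s hs).rpow_const (p := p) (Or.inl (by positivity))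
  · refine (((hshift s hs).rpow_const (p := p - 1) (Or.inl (by positivity))).const_mul
      p).congr_deriv ?_
    rw [show p - 1 - 1 = p - 2 by ring]
    ring

theorem lap_barrier_le (hb : 0 < b) (hbp : barrierConst N p ≤ b)
    (x : EuclideanSpace ℝ (Fin N)) : lap (barrier b p) x ≤ barrier b p x := by
  rw [lap_barrier hb]
  set s := ‖x‖ ^ 2
  set z := b + s with hz_def
  have hs : 0 ≤ s := sq_nonneg _
  have hz : 0 < z := by positivity
  have hz₂ : 0 < z ^ (p - 2) := rpow_pos_of_pos hz _
  have hz₁ : 0 < z ^ (p - 1) := rpow_pos_of_pos hz _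
  have hstep₂ : z ^ (p - 2) * z = z ^ (p - 1) := by
    rw [← rpow_add_one hz.ne']; ring_nf
  have hstep₁ : z * z ^ (p - 1) = z ^ p := by
    rw [mul_comm, ← rpow_add_one hz.ne']; ring_nf
  have hsz : s ≤ z := by linarith
  have hfirst : s * (p * (p - 1) * z ^ (p - 2)) ≤ |p| * |p - 1| * z ^ (p - 1) :=
    calc s * (p * (p - 1) * z ^ (p - 2)) = p * (p - 1) * (z ^ (p - 2) * s) := by ring
      _ ≤ |p * (p - 1)| * (z ^ (p - 2) * z) :=
        mul_le_mul (le_abs_self _) (mul_le_mul_of_nonneg_left hsz hz₂.le) (by positivity)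
          (abs_nonneg _)
      _ = |p| * |p - 1| * z ^ (p - 1) := by rw [hstep₂, abs_mul]
  have hsecond : p * z ^ (p - 1) ≤ |p| * z ^ (p - 1) :=
    mul_le_mul_of_nonneg_right (le_abs_self p) hz₁.le
  calc 4 * s * (p * (p - 1) * z ^ (p - 2)) + 2 * N * (p * z ^ (p - 1))
      ≤ barrierConst N p * z ^ (p - 1) := by
        unfold barrierConst
        nlinarith [mul_le_mul_of_nonneg_left hsecond (Nat.cast_nonneg N)]
    _ ≤ z ^ p := by
        rw [← hstep₁]; exact mul_le_mul_of_nonneg_right (by linarith) hz₁.le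

theorem mul_lap_barrier_le {c : ℝ} (hc₀ : 0 ≤ c) (hc₁ : c ≤ 1) (hb : 0 < b)
    (hbp : barrierConst N p ≤ b) (x : EuclideanSpace ℝ (Fin N)) :
    c * lap (barrier b p) x ≤ barrier b p x :=
  (mul_le_mul_of_nonneg_left (lap_barrier_le hb hbp x) hc₀).trans
    (mul_le_of_le_one_left (barrier_pos hb x).le hc₁)

theorem rpow_neg_half_mul_le_iff (ν t K : ℝ) (x : E) :
    (1 + ‖x‖ ^ 2) ^ (-ν / 2 : ℝ) * t ≤ K ↔ t ≤ K * barrier 1 (ν / 2) x := by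
  rw [barrier, neg_div, rpow_neg (by positivity), inv_mul_le_iff₀ (by positivity), mul_comm]

end Barrier

section Comparison

variable {N : ℕ} {b p c a m : ℝ} {w : EuclideanSpace ℝ (Fin N) → ℝ}

theorem sub_smul_barrier_nonpos (hb : 0 < b) (hbp : barrierConst N p ≤ b)
    (hbp' : barrierConst N (p + 1) ≤ b) (hc₀ : 0 ≤ c) (hc₁ : c ≤ 1) (hw : ContDiff ℝ 2 w)
    (ha : 0 ≤ a) (hwm : ∀ x, w x ≤ m * barrier b p x)
    (hLw : ∀ x, -(a * barrier b p x) ≤ c * lap w x - 2 * w x) {η : ℝ} (hη : 0 < η)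
    (x : EuclideanSpace ℝ (Fin N)) :
    w x - a * barrier b p x - η * barrier b (p + 1) x ≤ 0 := by
  have hφ : ContDiff ℝ 2 (a • barrier b p : EuclideanSpace ℝ (Fin N) → ℝ) :=
    (contDiff_barrier hb).const_smul a
  have hψ : ContDiff ℝ 2 (η • barrier b (p + 1) : EuclideanSpace ℝ (Fin N) → ℝ) :=
    (contDiff_barrier hb).const_smul η
  have hwφ : ContDiff ℝ 2 (w - a • barrier b p) := hw.sub hφ
  refine nonpos_of_mul_le_mul_lap (u := w - a • barrier b p - η • barrier b (p + 1)) (k := 2)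
    (hwφ.sub hψ) hc₀ two_pos (fun y => ?_) ?_ x
  · rw [lap_sub hwφ hψ, lap_sub hw hφ, lap_smul, lap_smul]
    simp only [Pi.sub_apply, Pi.smul_apply, smul_eq_mul]
    nlinarith [hLw y, mul_le_mul_of_nonneg_left (mul_lap_barrier_le hc₀ hc₁ hb hbp y) ha,
      mul_le_mul_of_nonneg_left (mul_lap_barrier_le hc₀ hc₁ hb hbp' y) hη.le,
      mul_pos hη (barrier_pos (p := p + 1) hb y)]
  · have hfar : ∀ᶠ y in cocompact (EuclideanSpace ℝ (Fin N)), (m - a) / η ≤ ‖y‖ ^ 2 :=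
      ((tendsto_pow_atTop two_ne_zero).comp tendsto_norm_cocompact_atTop).eventually_ge_atTop _
    filter_upwards [hfar] with y hy
    have hcoef : m - a - η * (b + ‖y‖ ^ 2) ≤ 0 := by
      rw [div_le_iff₀ hη] at hy; nlinarith
    simp only [Pi.sub_apply, Pi.smul_apply, smul_eq_mul, barrier_add_one hb]
    nlinarith [hwm y, mul_nonpos_of_nonpos_of_nonneg hcoef (barrier_pos (p := p) hb y).le]

theorem le_barrier_of_coercive (hb : 0 < b) (hbp : barrierConst N p ≤ b)
    (hbp' : barrierConst N (p + 1) ≤ b) (hc₀ : 0 ≤ c) (hc₁ : c ≤ 1) (hw : ContDiff ℝ 2 w)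
    (ha : 0 ≤ a) (hwm : ∀ x, w x ≤ m * barrier b p x)
    (hLw : ∀ x, -(a * barrier b p x) ≤ c * lap w x - 2 * w x)
    (x : EuclideanSpace ℝ (Fin N)) : w x ≤ a * barrier b p x := by
  refine le_of_forall_pos_le_add fun δ hδ => ?_
  have hψ := barrier_pos (p := p + 1) hb x
  have := sub_smul_barrier_nonpos hb hbp hbp' hc₀ hc₁ hw ha hwm hLw (div_pos hδ hψ) x
  rw [div_mul_cancel₀ δ hψ.ne'] at this
  linarith

theorem abs_le_barrier_of_coercive (hb : 0 < b) (hbp : barrierConst N p ≤ b)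
    (hbp' : barrierConst N (p + 1) ≤ b) (hc₀ : 0 ≤ c) (hc₁ : c ≤ 1) (hw : ContDiff ℝ 2 w)
    (hwm : ∀ x, |w x| ≤ m * barrier b p x)
    (hLw : ∀ x, |c * lap w x - 2 * w x| ≤ a * barrier b p x)
    (x : EuclideanSpace ℝ (Fin N)) : |w x| ≤ a * barrier b p x := by
  have ha : 0 ≤ a :=
    nonneg_of_mul_nonneg_left ((abs_nonneg _).trans (hLw x)) (barrier_pos hb x)
  refine abs_le.mpr ⟨?_, le_barrier_of_coercive hb hbp hbp' hc₀ hc₁ hw ha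
    (fun y => (le_abs_self _).trans (hwm y)) (fun y => (abs_le.mp (hLw y)).1) x⟩
  have hneg := le_barrier_of_coercive hb hbp hbp' hc₀ hc₁ (w := -w) hw.neg ha
    (fun y => (neg_le_abs _).trans (hwm y)) (fun y => ?_) x
  · simp only [Pi.neg_apply] at hneg
    linarith
  · rw [lap_neg]
    simp only [Pi.neg_apply]
    linarith [(abs_le.mp (hLw y)).2]

end Comparison

theorem coercive_operator_weighted_estimate_general (N : ℕ) (ν : ℝ) :
    ∃ C : ℝ, 0 < C ∧ ∀ ε : ℝ, ε ∈ Set.Ioo (0 : ℝ) 1 →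
      ∀ w : EuclideanSpace ℝ (Fin N) → ℝ, ContDiff ℝ 2 w →
        (∃ M : ℝ, ∀ x, (1 + ‖x‖ ^ 2) ^ (-ν / 2 : ℝ) * |w x| ≤ M) →
        ∀ K : ℝ,
          (∀ x, (1 + ‖x‖ ^ 2) ^ (-ν / 2 : ℝ) * |ε ^ 2 * lap w x - 2 * w x| ≤ K) →
          ∀ x, (1 + ‖x‖ ^ 2) ^ (-ν / 2 : ℝ) * |w x| ≤ C * K := by
  set p := ν / 2
  set b := 1 + barrierConst N p + barrierConst N (p + 1)
  have hbp := barrierConst_nonneg N p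
  have hbp' := barrierConst_nonneg N (p + 1)
  have hb : 1 ≤ b := by linarith
  have hweight_le : ∀ y : EuclideanSpace ℝ (Fin N), barrier 1 p y ≤ b ^ |p| * barrier b p y :=
    barrier_le_rpow_abs_mul_barrier one_pos (by positivity) hb (by nlinarith) (by linarith)
  have hbarrier_le : ∀ y : EuclideanSpace ℝ (Fin N),
      barrier b p y ≤ b ^ |p| * barrier 1 p y :=
    barrier_le_rpow_abs_mul_barrier (by positivity) one_pos hb (by linarith) (by nlinarith)
  refine ⟨b ^ |p| * b ^ |p|, by positivity, ?_⟩
  rintro ε ⟨hε₀, hε₁⟩ w hw ⟨M, hM⟩ K hK x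
  simp only [rpow_neg_half_mul_le_iff] at hM hK ⊢
  have hM₀ : 0 ≤ M :=
    nonneg_of_mul_nonneg_left ((abs_nonneg _).trans (hM 0)) (barrier_pos one_pos 0)
  have hK₀ : 0 ≤ K :=
    nonneg_of_mul_nonneg_left ((abs_nonneg _).trans (hK 0)) (barrier_pos one_pos 0)
  have hest := abs_le_barrier_of_coercive (b := b) (p := p) (by positivity) (by linarith)
    (by linarith) (sq_nonneg ε) (pow_le_one₀ hε₀.le hε₁.le) hw
    (fun y => (hM y).trans (by rw [mul_assoc]; exact mul_le_mul_of_nonneg_left (hweight_le y) hM₀))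
    (fun y => (hK y).trans (by rw [mul_assoc]; exact mul_le_mul_of_nonneg_left (hweight_le y) hK₀))
    x
  calc |w x| ≤ K * b ^ |p| * barrier b p x := hest
    _ ≤ K * b ^ |p| * (b ^ |p| * barrier 1 p x) := by gcongr; exact hbarrier_le x
    _ = b ^ |p| * b ^ |p| * K * barrier 1 p x := by ring

/-- **Proposition 9.1** (`L^∞` part) : the uniform weighted a priori estimate
`sup (1+|x|²)^{-ν/2}|w| ≤ C sup (1+|x|²)^{-ν/2}|ε²Δw - 2w|` for the strongly coercive
operator `ε²Δ - 2`, with `C` independent of `ε ∈ (0,1)`. -/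
theorem coercive_operator_weighted_estimate (N : ℕ) (hN : 1 ≤ N) (ν : ℝ) :
    ∃ C : ℝ, 0 < C ∧ ∀ ε : ℝ, ε ∈ Set.Ioo (0 : ℝ) 1 →
      ∀ w : EuclideanSpace ℝ (Fin N) → ℝ, ContDiff ℝ 2 w →
        (∃ M : ℝ, ∀ x, (1 + ‖x‖ ^ 2) ^ (-ν / 2 : ℝ) * |w x| ≤ M) →
        ∀ K : ℝ,
          (∀ x, (1 + ‖x‖ ^ 2) ^ (-ν / 2 : ℝ) * |ε ^ 2 * lap w x - 2 * w x| ≤ K) →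
          ∀ x, (1 + ‖x‖ ^ 2) ^ (-ν / 2 : ℝ) * |w x| ≤ C * K :=
  coercive_operator_weighted_estimate_general N ν
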